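/- arXiv:2504.18247 — 4 statements merged into one kernel-verified Lean document; each statement's English description precedes it below -/
import Mathlib

section
/- Let α be a right-maximal repeat of a string w and let β be a prefix of α. If α contains β at least twice (once as a prefix of α and once at another position inside α), then β is not an α-extendable prefix of α; that is, the right-extension closure r(β) of β in w is not equal to α. -/
open Set List

variable {A : Type*}

/-- `β` occurs in `w` at (0-indexed) position `i`, i.e. `w[i..i+|β|-1] = β`. -/
def OccursAt (w β : List A) (i : ℕ) : Prop := β <+: w.drop i

/-- A repeat of `w`: a nonempty string occurring in `w` at two distinct positions. -/
def IsRepeat (w β : List A) : Prop :=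
  β ≠ [] ∧ ∃ i j, i ≠ j ∧ OccursAt w β i ∧ OccursAt w β j

/-- A right-maximal repeat of `w`: a repeat with two occurrences whose right-adjacent
characters differ.  The right-adjacent character of the occurrence at `i` is
`w[i+|β|]?  : Option A`; the value `none` (an occurrence at the right end of `w`)
plays the role of the special character distinct from all alphabet characters. -/
def IsRMRepeat (w β : List A) : Prop :=
  β ≠ [] ∧ ∃ i j, i ≠ j ∧ OccursAt w β i ∧ OccursAt w β j ∧
    w[i + β.length]? ≠ w[j + β.length]?

/-- `RightExtClosure w β α` says that `α = r(β)`, the right-maximal repeat obtained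
from `β` by repeatedly appending the unique common right-adjacent character of all
of its occurrences: equivalently, `α` is a right-maximal repeat of `w` extending `β`
such that no intermediate extension `γ` (with `β ≤ γ < α`) is already right-maximal. -/
def RightExtClosure (w β α : List A) : Prop :=
  IsRMRepeat w α ∧ β <+: α ∧
    ∀ γ, β <+: γ → γ <+: α → γ ≠ α → ¬ IsRMRepeat w γ

/-! Suppose `r(β) = α`. No prefix of `α` strictly between `β` and `α` is right-maximal, so an
occurrence of `β` at a position `p` different from an occurrence `q` of `α` extends, one character
at a time, to an occurrence of `α` at `p`: at each step the characters following `p` and `q` agree.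
Applied to the copy of `β` at offset `k` inside the two occurrences `i`, `j` of `α` witnessing its
right-maximality, this places `α` at `i + k` and `j + k`, so both occurrences at `i` and `j` are
followed by the same character `α[|α| - k]`, a contradiction. -/

namespace OccursAt

variable {w β γ : List A} {i : ℕ}

theorem getElem?_add (h : OccursAt w β i) {n : ℕ} (hn : n < β.length) :
    w[i + n]? = some β[n] := by
  rw [← List.getElem?_drop]
  exact List.prefix_iff_getElem?.mp h n hn

theorem append_singleton (h : OccursAt w γ i) {c : A} (hc : w[i + γ.length]? = some c) :
    OccursAt w (γ ++ [c]) i := by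
  refine List.prefix_iff_getElem?.mpr fun n hn => ?_
  rw [List.length_append, List.length_singleton] at hn
  rcases Nat.lt_succ_iff_lt_or_eq.mp hn with hn | rfl
  · rw [List.getElem_append_left hn, List.getElem?_drop]
    exact h.getElem?_add hn
  · simpa [List.getElem?_drop] using hc

theorem drop (h : OccursAt w β i) (k : ℕ) : OccursAt w (β.drop k) (i + k) := by
  rw [OccursAt, ← List.drop_drop]
  exact List.IsPrefix.drop h k

end OccursAt

theorem getElem?_add_length_eq_of_not_isRMRepeat {w γ : List A} {p q : ℕ} (hγ : γ ≠ [])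
    (hnot : ¬ IsRMRepeat w γ) (hp : OccursAt w γ p) (hq : OccursAt w γ q) (hpq : p ≠ q) :
    w[p + γ.length]? = w[q + γ.length]? := by
  by_contra hne
  exact hnot ⟨hγ, p, q, hpq, hp, hq, hne⟩

theorem RightExtClosure.occursAt_of_occursAt {w β α : List A} {p q : ℕ}
    (hcl : RightExtClosure w β α) (hβ : β ≠ []) (hq : OccursAt w α q) (hp : OccursAt w β p)
    (hpq : p ≠ q) : OccursAt w α p := by
  obtain ⟨-, hβα, hmin⟩ := hcl
  have hβlen : 0 < β.length := List.length_pos_iff.mpr hβ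
  suffices ∀ t, β.length ≤ t → t ≤ α.length → OccursAt w (α.take t) p by
    simpa using this α.length hβα.length_le le_rfl
  intro t ht htα
  induction t, ht using Nat.le_induction with
  | base => rwa [← List.prefix_iff_eq_take.mp hβα]
  | succ t ht ih =>
    have htα : t < α.length := htα
    have hlen : (α.take t).length = t := List.length_take_of_le htα.le
    have hγ : α.take t ≠ [] := by
      rw [← List.length_pos_iff, hlen]
      omega
    have hnot : ¬ IsRMRepeat w (α.take t) :=
      hmin _ (List.prefix_take_iff.mpr ⟨hβα, ht⟩) (List.take_prefix t α)
        (fun h => by simpa [h] using hlen.trans_lt htα)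
    have hnext : w[p + t]? = some α[t] := by
      have hsame := getElem?_add_length_eq_of_not_isRMRepeat hγ hnot (ih htα.le)
        ((List.take_prefix t α).trans hq) hpq
      rw [hlen] at hsame
      exact hsame.trans (hq.getElem?_add htα)
    rw [List.take_succ_eq_append_getElem htα]
    exact (ih htα.le).append_singleton (by rwa [hlen])

theorem not_extendable_of_contained_twice_general (w α β : List A) (hβ : β ≠ [])
    (htwice : ∃ k, 0 < k ∧ β <+: α.drop k) :
    ¬ RightExtClosure w β α := by
  intro hcl
  obtain ⟨-, i, j, hij, hi, hj, hdiff⟩ := hcl.1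
  obtain ⟨k, hk, hβk⟩ := htwice
  have hkα : k < α.length := by
    have := hβk.length_le
    rw [List.length_drop] at this
    have := List.length_pos_iff.mpr hβ
    omega
  have hnext : ∀ q, OccursAt w α q → w[q + α.length]? = some α[α.length - k] := by
    intro q hq
    have hαk : OccursAt w α (q + k) :=
      hcl.occursAt_of_occursAt hβ hq (hβk.trans (hq.drop k)) (by omega)
    rw [show q + α.length = q + k + (α.length - k) by omega]
    exact hαk.getElem?_add (by omega)
  exact hdiff ((hnext i hi).trans (hnext j hj).symm)

/-- if a right-maximal repeat `α` of `w` contains its (nonempty) prefix `β`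
at least twice — once as a prefix and once elsewhere inside `α` — then `β` is not an
`α`-extendable prefix of `α`, i.e. `r(β) ≠ α`. -/
theorem not_extendable_of_contained_twice (w α β : List A)
    (hα : IsRMRepeat w α) (hpre : β <+: α) (hβ : β ≠ [])
    (htwice : ∃ k, 0 < k ∧ β <+: α.drop k) :
    ¬ RightExtClosure w β α :=
  not_extendable_of_contained_twice_general w α β hβ htwice
end

section
/- Let α be a right-maximal repeat of a string w, let i and j be starting positions of occurrences of α with i < j < f(i), where f(i) is the largest starting position of an occurrence of α that is at most i + |α| − 1. Then neither w[i..j−1] nor w[j..f(i)−1], nor any of their prefixes, is an α-extendable prefix of α. -/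
open Set List

variable {A : Type*}

/-- Auxiliary: dropping (within range) preserves the prefix relation. -/
lemma prefix_drop_of_prefix {l₁ l₂ : List A} (h : l₁ <+: l₂) (n : ℕ) (hn : n ≤ l₁.length) :
    l₁.drop n <+: l₂.drop n := by
  obtain ⟨t, rfl⟩ := h
  rw [List.drop_append_of_le_length hn]
  exact ⟨t, rfl⟩

/-- Extension lemma: if `r(β) = α` (in the sense of `RightExtClosure`) and `α` occurs
somewhere, then every occurrence of `β` extends to an occurrence of `α`. -/
lemma occ_closure (w β α : List A) (hβ : β ≠ []) (i : ℕ) (hi : OccursAt w α i)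
    (hβα : β <+: α)
    (hcl : ∀ γ, β <+: γ → γ <+: α → γ ≠ α → ¬ IsRMRepeat w γ) :
    ∀ p, OccursAt w β p → OccursAt w α p := by
  have key : ∀ n γ, α.length - γ.length = n → β <+: γ → γ <+: α →
      ∀ p, OccursAt w γ p → OccursAt w α p := by
    intro n
    induction n with
    | zero =>
      intro γ hlen hβγ hγα p hp
      have : γ = α := hγα.eq_of_length_le (Nat.le_of_sub_eq_zero hlen)
      rwa [← this]
    | succ n ih =>
      intro γ hlen hβγ hγα p hp
      have hγne : γ ≠ α := by
        intro h; rw [h] at hlen; simp at hlen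
      have hγnil : γ ≠ [] := by
        intro h; rw [h] at hβγ; exact hβ (List.prefix_nil.mp hβγ)
      obtain ⟨t, ht⟩ := hγα
      cases t with
      | nil => exact absurd (by simpa using ht) hγne
      | cons c t' =>
        have hγα' : γ <+: α := ⟨c :: t', ht⟩
        have hγi : OccursAt w γ i := hγα'.trans hi
        have hci : w[i + γ.length]? = some c := by
          obtain ⟨s, hs⟩ := hi
          rw [← List.getElem?_drop, ← hs, ← ht]
          rw [List.append_assoc, List.getElem?_append_right (le_refl _)]
          simp
        have hcp : w[p + γ.length]? = some c := by
          by_cases hpi : p = i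
          · rw [hpi]; exact hci
          · have hnrm := hcl γ hβγ hγα' hγne
            rw [IsRMRepeat] at hnrm
            push_neg at hnrm
            have := hnrm hγnil p i hpi hp hγi
            rw [this]; exact hci
        have hp' : OccursAt w (γ ++ [c]) p := by
          obtain ⟨s, hs⟩ := hp
          have hs0 : s[0]? = some c := by
            rw [← List.getElem?_drop (xs := w) (i := p) (j := γ.length), ← hs,
              List.getElem?_append_right (le_refl _)] at hcp
            simpa using hcp
          cases s with
          | nil => simp at hs0
          | cons c' s' =>
            simp only [List.getElem?_cons_zero, Option.some_inj] at hs0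
            refine ⟨s', ?_⟩
            rw [← hs, hs0, List.append_assoc]
            rfl
        refine ih (γ ++ [c]) ?_ (hβγ.trans ⟨[c], rfl⟩)
          ⟨t', by rw [← ht]; simp⟩ p hp'
        have hlt : γ.length < α.length := by
          rw [← ht]; simp
        simp only [List.length_append, List.length_cons, List.length_nil]
        omega
  intro p hp
  exact key (α.length - β.length) β rfl List.prefix_rfl hβα p hp

/-- let `i < j < fi` be starting positions of occurrences of the
right-maximal repeat `α` in `w`, where `fi = f(i)` is the largest starting position of an
occurrence of `α` that is at most `i + |α| − 1`.  Then neither `w[i..j−1]` nor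
`w[j..fi−1]`, nor any of their (nonempty) prefixes, is an `α`-extendable prefix of `α`. -/
theorem not_extendable_between (w α : List A) (i j fi : ℕ)
    (hα : IsRMRepeat w α)
    (hi : OccursAt w α i) (hj : OccursAt w α j) (hfi : OccursAt w α fi)
    (hij : i < j) (hjf : j < fi)
    (hfile : fi ≤ i + α.length - 1)
    (hmax : ∀ k, OccursAt w α k → k ≤ i + α.length - 1 → k ≤ fi) :
    ∀ β, β ≠ [] →
      (β <+: (w.drop i).take (j - i) ∨ β <+: (w.drop j).take (fi - j)) →
      ¬ RightExtClosure w β α := by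
  intro β hβne hcase hcl
  obtain ⟨hαrm, hβα, hstages⟩ := hcl
  have hαne : α ≠ [] := hαrm.1
  have hαpos : 0 < α.length := List.length_pos_iff.mpr hαne
  have hfi' : fi - i ≤ α.length - 1 := by omega
  -- `β` occurs inside `α` at a positive offset `o` with `o + |β| ≤ |α|`.
  obtain ⟨o, ho1, ho2, hoff⟩ :
      ∃ o, 1 ≤ o ∧ o + β.length ≤ α.length ∧ β <+: α.drop o := by
    rcases hcase with h1 | h2
    · -- case 1 : |β| ≤ j - i ; take o = fi - j
      have hlen : β.length ≤ j - i := by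
        have := h1.length_le
        rw [List.length_take] at this
        exact this.trans (min_le_left _ _)
      refine ⟨fi - j, by omega, by omega, ?_⟩
      -- both β and α.drop (fi-j) are prefixes of w.drop fi
      have hβfi : β <+: w.drop fi := hβα.trans hfi
      have hαd : α.drop (fi - j) <+: w.drop fi := by
        have := prefix_drop_of_prefix hj (fi - j) (by omega)
        rwa [List.drop_drop, show j + (fi - j) = fi by omega] at this
      refine List.prefix_of_prefix_length_le hβfi hαd ?_
      rw [List.length_drop]
      omega
    · -- case 2 : |β| ≤ fi - j ; take o = j - i
      have hlen : β.length ≤ fi - j := by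
        have := h2.length_le
        rw [List.length_take] at this
        exact this.trans (min_le_left _ _)
      refine ⟨j - i, by omega, by omega, ?_⟩
      have hβj : β <+: w.drop j := hβα.trans hj
      have hαd : α.drop (j - i) <+: w.drop j := by
        have := prefix_drop_of_prefix hi (j - i) (by omega)
        rwa [List.drop_drop, show i + (j - i) = j by omega] at this
      refine List.prefix_of_prefix_length_le hβj hαd ?_
      rw [List.length_drop]
      omega
  -- every occurrence of β is an occurrence of α
  have hext := occ_closure w β α hβne i hi hβα hstages
  -- hence α occurs at i + t * o for every t
  have hchain : ∀ t, OccursAt w α (i + t * o) := by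
    intro t
    induction t with
    | zero => simpa using hi
    | succ t ih =>
      have hβocc : OccursAt w β (i + t * o + o) := by
        have := prefix_drop_of_prefix ih o (by omega)
        rw [List.drop_drop] at this
        have h2 : β <+: (w.drop (i + t * o + o)) := hoff.trans this
        exact h2
      have h3 := hext _ hβocc
      rwa [show i + t * o + o = i + (t + 1) * o by ring] at h3
  -- contradiction with finiteness of w
  have hbad := hchain (w.length + 1)
  have hlen : α.length ≤ (w.drop (i + (w.length + 1) * o)).length := hbad.length_le
  rw [List.length_drop] at hlen
  have : (w.length + 1) * o ≥ w.length + 1 := Nat.le_mul_of_pos_right _ ho1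
  omega
end

section
/- If β is a nonempty string that occurs at least twice in a string w, then the right-extension r(β) of β is a well-defined right-maximal repeat of w: the process of extending β by the unique common right-adjacent character terminates. -/
/-! If a repeat `β` is not right-maximal, its right-adjacent characters all agree, and they are
not all the end marker because two distinct occurrences cannot both end at the end of `w`; so
`β ++ [c]` is again a repeat, and as repeats are no longer than `w` the extension stops.
Two closures of `β` agree letter by letter: at each common, non-right-maximal prefix `γ`, the
next letter of either closure follows some occurrence of `γ`, and since the shorter closure is a
repeat these occurrences can be taken at distinct positions, so the letters coincide. Hence the
shorter closure is a prefix of the longer one, and minimality of the longer makes them equal. -/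

open Set List

variable {A : Type*}

theorem List.prefix_of_forall_append_singleton {α : Type*} {β l₁ l₂ : List α}
    (h₁ : β <+: l₁) (h₂ : β <+: l₂) (hlen : l₁.length ≤ l₂.length)
    (h : ∀ γ a b, β <+: γ → γ ++ [a] <+: l₁ → γ ++ [b] <+: l₂ → a = b) : l₁ <+: l₂ := by
  induction l₁ using List.reverseRecOn with
  | nil => exact nil_prefix
  | append_singleton γ a ih =>
    rcases prefix_concat_iff.mp h₁ with rfl | hβγ
    · exact h₂
    have hγ : γ <+: l₂ := ih hβγ (by simp at hlen; omega)
      fun δ x y hδ hx hy => h δ x y hδ (hx.trans (prefix_append _ _)) hy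
    obtain ⟨_ | ⟨b, t⟩, rfl⟩ := hγ
    · simp at hlen
    obtain rfl : a = b := h γ a b hβγ (prefix_refl _) (by simp)
    simp

theorem List.append_singleton_prefix_iff {α : Type*} {l m : List α} {a : α} :
    l ++ [a] <+: m ↔ l <+: m ∧ m[l.length]? = some a := by
  constructor
  · rintro ⟨t, rfl⟩
    exact ⟨(prefix_append _ _).trans (prefix_append _ _), by simp⟩
  · rintro ⟨⟨_ | ⟨b, t⟩, rfl⟩, hc⟩
    · simp at hc
    · obtain rfl : b = a := by simpa using hc
      simp

section Repeats

variable {w α β γ : List A} {i : ℕ}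

theorem OccursAt.add_length_le (hβ : β ≠ []) (h : OccursAt w β i) : i + β.length ≤ w.length := by
  have hle := List.IsPrefix.length_le h
  have hpos := length_pos_iff.mpr hβ
  simp only [length_drop] at hle
  omega

theorem occursAt_append_singleton {a : A} :
    OccursAt w (γ ++ [a]) i ↔ OccursAt w γ i ∧ w[i + γ.length]? = some a := by
  rw [OccursAt, OccursAt, append_singleton_prefix_iff, getElem?_drop]

theorem IsRepeat.of_prefix (hα : IsRepeat w α) (hγ : γ ≠ []) (h : γ <+: α) : IsRepeat w γ :=
  let ⟨_, i, j, hij, hi, hj⟩ := hα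
  ⟨hγ, i, j, hij, h.trans hi, h.trans hj⟩

theorem IsRMRepeat.isRepeat (h : IsRMRepeat w β) : IsRepeat w β :=
  let ⟨hβ, i, j, hij, hi, hj, _⟩ := h
  ⟨hβ, i, j, hij, hi, hj⟩

theorem IsRepeat.exists_append_singleton (hβ : IsRepeat w β) (hRM : ¬ IsRMRepeat w β) :
    ∃ c, IsRepeat w (β ++ [c]) := by
  obtain ⟨hne, i, j, hij, hi, hj⟩ := hβ
  have hsame : w[i + β.length]? = w[j + β.length]? := by
    by_contra h
    exact hRM ⟨hne, i, j, hij, hi, hj, h⟩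
  cases hc : w[i + β.length]? with
  | none =>
    have hc' : w[j + β.length]? = none := hsame ▸ hc
    rw [getElem?_eq_none_iff] at hc hc'
    have := hi.add_length_le hne
    have := hj.add_length_le hne
    omega
  | some c =>
    exact ⟨c, by simp, i, j, hij, occursAt_append_singleton.2 ⟨hi, hc⟩,
      occursAt_append_singleton.2 ⟨hj, hsame ▸ hc⟩⟩

theorem eq_of_not_isRMRepeat (hγ : γ ≠ []) (hRM : ¬ IsRMRepeat w γ) {a b : A}
    (ha : IsRepeat w (γ ++ [a])) {j : ℕ} (hb : OccursAt w (γ ++ [b]) j) : a = b := by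
  obtain ⟨-, i, k, hik, hi, hk⟩ := ha
  obtain ⟨p, hp, hpj⟩ : ∃ p, OccursAt w (γ ++ [a]) p ∧ p ≠ j := by
    rcases eq_or_ne i j with rfl | h
    exacts [⟨k, hk, hik.symm⟩, ⟨i, hi, h⟩]
  rw [occursAt_append_singleton] at hp hb
  by_contra hab
  exact hRM ⟨hγ, p, j, hpj, hp.1, hb.1, by simpa [hp.2, hb.2] using hab⟩

end Repeats

namespace RightExtClosure

variable {w α α₁ α₂ β : List A}

theorem self (h : IsRMRepeat w β) : RightExtClosure w β β :=
  ⟨h, prefix_refl _, fun _ h₁ h₂ hne _ =>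
    hne (h₂.eq_of_length (le_antisymm h₂.length_le h₁.length_le))⟩

theorem of_append_singleton {c : A} (hβ : ¬ IsRMRepeat w β) (h : RightExtClosure w (β ++ [c]) α) :
    RightExtClosure w β α := by
  refine ⟨h.1, (prefix_append _ _).trans h.2.1, fun γ hβγ hγα hne => ?_⟩
  rcases le_or_gt γ.length β.length with hl | hl
  · obtain rfl := hβγ.eq_of_length (le_antisymm hβγ.length_le hl)
    exact hβ
  · exact h.2.2 γ (prefix_of_prefix_length_le h.2.1 hγα (by simpa using hl)) hγα hne

theorem prefix_of_length_le (hβ : β ≠ []) (h₁ : RightExtClosure w β α₁)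
    (h₂ : RightExtClosure w β α₂) (hlen : α₁.length ≤ α₂.length) : α₁ <+: α₂ := by
  refine prefix_of_forall_append_singleton h₁.2.1 h₂.2.1 hlen fun γ a b hβγ ha hb => ?_
  have hγ : γ ≠ [] := by
    rintro rfl
    exact hβ (prefix_nil.mp hβγ)
  have hRM : ¬ IsRMRepeat w γ :=
    h₁.2.2 γ hβγ ((prefix_append _ _).trans ha) fun e => by simpa [e] using ha.length_le
  obtain ⟨-, k, -, -, hk, -⟩ := h₂.1
  exact eq_of_not_isRMRepeat hγ hRM (h₁.1.isRepeat.of_prefix (by simp) ha) (hb.trans hk)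

theorem eq_of_length_le (hβ : β ≠ []) (h₁ : RightExtClosure w β α₁)
    (h₂ : RightExtClosure w β α₂) (hlen : α₁.length ≤ α₂.length) : α₁ = α₂ := by
  by_contra hne
  exact h₂.2.2 α₁ h₁.2.1 (prefix_of_length_le hβ h₁ h₂ hlen) hne h₁.1

end RightExtClosure

theorem exists_rightExtClosure {w β : List A} (hβ : IsRepeat w β) : ∃ α, RightExtClosure w β α := by
  by_cases hRM : IsRMRepeat w β
  · exact ⟨β, .self hRM⟩
  obtain ⟨c, hc⟩ := hβ.exists_append_singleton hRM
  obtain ⟨α, hα⟩ := exists_rightExtClosure hc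
  exact ⟨α, hα.of_append_singleton hRM⟩
termination_by w.length - β.length
decreasing_by
  obtain ⟨-, i, -, -, hi, -⟩ := hc
  have := hi.add_length_le (by simp)
  simp only [length_append, length_singleton] at this ⊢
  omega

/-- for every repeat `β` of `w`, the right-extension `r(β)` is a well-defined
right-maximal repeat of `w`: the extension process terminates and its result is unique. -/
theorem rightExtClosure_existsUnique (w β : List A) (hβ : IsRepeat w β) :
    ∃! α, RightExtClosure w β α := by
  obtain ⟨α, hα⟩ := exists_rightExtClosure hβ
  refine ⟨α, hα, fun α' hα' => ?_⟩
  rcases le_total α'.length α.length with h | h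
  · exact hα'.eq_of_length_le hβ.1 hα h
  · exact (hα.eq_of_length_le hβ.1 hα' h).symm
end

section
/- A string w of length n has at most n − 1 distinct right-maximal repeats. -/
/-!
Send each right-maximal repeat `α` to the leftmost occurrence of `α` whose right-adjacent
character differs from that of the leftmost occurrence of `α`. This position lies in
`[1, n)`. Two repeats with the same image occur at the same place, so one is a prefix of the
other, say `α` a proper prefix of `β`; then the leftmost occurrence of `β` is an occurrence
of `α` followed by the same character as `α` at the common image, hence it is already a
branching occurrence of `α`, and minimality forces it to be the common image, which is
impossible for `β`. So the map is injective.
-/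

open Set List

variable {A : Type*}

namespace OccursAt

variable {w α β : List A} {i k : ℕ}

theorem lt_length (hα : α ≠ []) (h : OccursAt w α i) : i < w.length := by
  by_contra! hi
  rw [OccursAt, List.drop_eq_nil_of_le hi] at h
  exact hα (List.prefix_nil.mp h)

theorem getElem?_add_s8 (h : OccursAt w α i) (hk : k < α.length) : w[i + k]? = α[k]? := by
  obtain ⟨t, ht⟩ := h
  rw [← List.getElem?_drop, ← ht, List.getElem?_append_left hk]

theorem of_prefix (hαβ : α <+: β) (h : OccursAt w β i) : OccursAt w α i :=
  hαβ.trans h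

theorem prefix_or_prefix (hα : OccursAt w α i) (hβ : OccursAt w β i) : α <+: β ∨ β <+: α :=
  List.prefix_or_prefix_of_prefix hα hβ

end OccursAt

def nextChar (w α : List A) (i : ℕ) : Option A := w[i + α.length]?

noncomputable def firstOcc (w α : List A) : ℕ := sInf {i | OccursAt w α i}

def branchOccs (w α : List A) : Set ℕ :=
  {i | OccursAt w α i ∧ nextChar w α i ≠ nextChar w α (firstOcc w α)}

noncomputable def branchPos (w α : List A) : ℕ := sInf (branchOccs w α)

section

variable {w α β : List A}

theorem firstOcc_le {i : ℕ} (h : OccursAt w α i) : firstOcc w α ≤ i := Nat.sInf_le h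

theorem IsRMRepeat.branchOccs_nonempty (hα : IsRMRepeat w α) : (branchOccs w α).Nonempty := by
  obtain ⟨-, i, j, -, hi, hj, hij⟩ := hα
  by_cases h : nextChar w α i = nextChar w α (firstOcc w α)
  · exact ⟨j, hj, fun hj' => hij (h.trans hj'.symm)⟩
  · exact ⟨i, hi, h⟩

theorem IsRMRepeat.branchPos_mem (hα : IsRMRepeat w α) : branchPos w α ∈ branchOccs w α :=
  Nat.sInf_mem hα.branchOccs_nonempty

theorem IsRMRepeat.occursAt_branchPos (hα : IsRMRepeat w α) : OccursAt w α (branchPos w α) :=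
  hα.branchPos_mem.1

theorem IsRMRepeat.firstOcc_lt_branchPos (hα : IsRMRepeat w α) :
    firstOcc w α < branchPos w α :=
  (firstOcc_le hα.occursAt_branchPos).lt_of_ne fun h => hα.branchPos_mem.2 (by rw [h])

theorem IsRMRepeat.branchPos_mem_Ico (hα : IsRMRepeat w α) :
    branchPos w α ∈ Set.Ico 1 w.length :=
  ⟨Nat.one_le_of_lt hα.firstOcc_lt_branchPos, hα.occursAt_branchPos.lt_length hα.1⟩

theorem branchPos_ne_of_prefix (hα : IsRMRepeat w α) (hβ : IsRMRepeat w β) (hαβ : α <+: β)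
    (hne : α ≠ β) : branchPos w α ≠ branchPos w β := by
  intro hj
  set j := branchPos w β
  set m := firstOcc w β
  have hlen : α.length < β.length := hαβ.length_le.lt_of_ne fun h => hne (hαβ.eq_of_length h)
  have hm : OccursAt w β m := Nat.sInf_mem (s := {i | OccursAt w β i}) ⟨j, hβ.occursAt_branchPos⟩
  have hnext : nextChar w α j = nextChar w α m := by
    rw [nextChar, nextChar, hβ.occursAt_branchPos.getElem?_add_s8 hlen, hm.getElem?_add_s8 hlen]
  have hm_branch : m ∈ branchOccs w α :=
    ⟨hm.of_prefix hαβ, hnext ▸ hj ▸ hα.branchPos_mem.2⟩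
  have hjm : j ≤ m := hj ▸ Nat.sInf_le hm_branch
  exact lt_irrefl m (hβ.firstOcc_lt_branchPos.trans_le hjm)

theorem branchPos_injOn : InjOn (branchPos w) {α | IsRMRepeat w α} := by
  intro α hα β hβ hj
  by_contra hne
  rcases hα.occursAt_branchPos.prefix_or_prefix (hj ▸ hβ.occursAt_branchPos) with h | h
  · exact branchPos_ne_of_prefix hα hβ h hne hj
  · exact branchPos_ne_of_prefix hβ hα h (Ne.symm hne) hj.symm

end

theorem card_rm_repeats_le_general (w : List A) :
    {α : List A | IsRMRepeat w α}.ncard ≤ w.length - 1 := by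
  calc {α : List A | IsRMRepeat w α}.ncard
      ≤ (Set.Ico 1 w.length).ncard :=
        ncard_le_ncard_of_injOn (branchPos w) (fun _ hα => IsRMRepeat.branchPos_mem_Ico hα)
          branchPos_injOn (finite_Ico 1 w.length)
    _ = w.length - 1 := by rw [← Finset.coe_Ico, ncard_coe_finset, Nat.card_Ico]

/-- a string of length `n ≥ 1` has at most `n − 1` distinct right-maximal
repeats. -/
theorem card_rm_repeats_le (w : List A) (hw : 1 ≤ w.length) :
    {α : List A | IsRMRepeat w α}.ncard ≤ w.length - 1 :=
  card_rm_repeats_le_general w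
end
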